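/- arXiv:2407.17608 — 3 statements merged into one kernel-verified Lean document; each statement's English description precedes it below -/
import Mathlib

section
/- For any two permutations π, γ ∈ S_n, #(π) + #(γ) + #(π⁻¹γ) ≤ n + 2·#(π ∨ γ), where π ∨ γ denotes the join in the partition lattice of the partitions induced by the cycles of π and γ. -/
/-!
Induct on `γ`, building it from the identity by multiplying with transpositions `(a b)` that
merge two cycles. For `γ = 1` the inequality is an equality. In a merging step `γ ↦ (a b) γ`,
`#(γ)` drops by one, `π⁻¹ γ` is multiplied by the transposition `(π⁻¹a π⁻¹b)`, so `#(π⁻¹ γ)`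
changes by one, and the join `π ∨ γ` loses at most one block. Since the cycles of `π⁻¹ γ` refine
`π ∨ γ`, the join can only lose a block when `#(π⁻¹ γ)` drops as well.
-/

/-- The setoid on `α` whose classes are the cycles of the permutation `π`. -/
def cycleSetoid {α : Type*} (π : Equiv.Perm α) : Setoid α :=
  ⟨π.SameCycle, ⟨fun x => Equiv.Perm.SameCycle.refl π x,
    fun h => h.symm, fun h1 h2 => h1.trans h2⟩⟩

/-- The number of cycles (including fixed points) of a permutation. -/
noncomputable def numCycles {α : Type*} (π : Equiv.Perm α) : ℕ :=
  Nat.card (Quotient (cycleSetoid π))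

open Equiv Equiv.Perm

namespace Setoid

variable {α : Type*} [Finite α]

theorem card_quotient_le_of_le {s t : Setoid α} (h : s ≤ t) :
    Nat.card (Quotient t) ≤ Nat.card (Quotient s) :=
  Nat.card_le_card_of_surjective (map_of_le h) <|
    Function.Surjective.of_comp (g := Quotient.mk s) Quotient.mk_surjective

theorem card_quotient_lt_of_le {s t : Setoid α} (h : s ≤ t) {a b : α} (hab : t a b)
    (hnab : ¬s a b) : Nat.card (Quotient t) < Nat.card (Quotient s) := by
  have hsurj : Function.Surjective (map_of_le h) :=
    Function.Surjective.of_comp (g := Quotient.mk s) Quotient.mk_surjective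
  refine (card_quotient_le_of_le h).lt_of_ne fun hcard => hnab (Quotient.exact ?_)
  exact ((Nat.bijective_iff_surjective_and_card _).2 ⟨hsurj, hcard.symm⟩).injective
    (Quotient.sound hab)

/-- The hypothesis says that `t` lies below the equivalence generated by `s` and `a ~ b`. -/
theorem card_quotient_le_card_quotient_add_one {s t : Setoid α} {a b : α}
    (h : ∀ u : Setoid α, s ≤ u → u a b → t ≤ u) :
    Nat.card (Quotient s) ≤ Nat.card (Quotient t) + 1 := by
  classical
  let f : α → Quotient s := fun x => if s x b then ⟦a⟧ else ⟦x⟧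
  have hker : t ≤ ker f := by
    refine h _ (fun x y hxy => ker_def.2 ?_) (ker_def.2 ?_)
    · have hb : s x b ↔ s y b := ⟨s.trans' (s.symm' hxy), s.trans' hxy⟩
      simp only [f, hb]
      split_ifs
      · rfl
      · exact Quotient.sound hxy
    · simp only [f, s.refl' b]
      split_ifs <;> rfl
  have hrange : Set.univ ⊆ Set.range f ∪ {⟦b⟧} := by
    rintro ⟨x⟩ -
    by_cases hx : s x b
    · exact Or.inr (Quotient.sound hx)
    · exact Or.inl ⟨x, if_neg hx⟩
  calc Nat.card (Quotient s) = (Set.univ : Set (Quotient s)).ncard := (Set.ncard_univ _).symm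
    _ ≤ (Set.range f ∪ {⟦b⟧}).ncard := Set.ncard_le_ncard hrange
    _ ≤ (Set.range f).ncard + 1 := (Set.ncard_union_le _ _).trans_eq (by rw [Set.ncard_singleton])
    _ = Nat.card (Quotient (ker f)) + 1 := by
      rw [Nat.card_congr (quotientKerEquivRange f), Nat.card_coe_set_eq]
    _ ≤ Nat.card (Quotient t) + 1 := Nat.add_le_add_right (card_quotient_le_of_le hker) 1

end Setoid

variable {α : Type*}

theorem cycleSetoid_le_iff {ρ : Perm α} {s : Setoid α} :
    cycleSetoid ρ ≤ s ↔ ∀ x, s x (ρ x) := by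
  refine ⟨fun h x => h (sameCycle_apply_right.2 (SameCycle.refl ρ x)), ?_⟩
  rintro h x _ ⟨k, rfl⟩
  refine zpow_induction_right (P := fun σ : Perm α => ∀ x, s x (σ x)) s.refl'
    (fun σ hσ x => s.trans' (h x) (hσ (ρ x))) (fun σ hσ x => ?_) k x
  refine s.trans' (s.symm' ?_) (hσ (ρ⁻¹ x))
  simpa using h (ρ⁻¹ x)

theorem cycleSetoid_swap_mul_le [DecidableEq α] {ρ : Perm α} {s : Setoid α} {a b : α}
    (hρ : cycleSetoid ρ ≤ s) (hab : s a b) : cycleSetoid (swap a b * ρ) ≤ s := by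
  rw [cycleSetoid_le_iff] at hρ ⊢
  refine fun x => s.trans' (hρ x) ?_
  rw [Perm.mul_apply, swap_apply_def]
  split_ifs with ha hb
  · exact ha ▸ hab
  · exact hb ▸ s.symm' hab
  · exact s.refl' _

theorem cycleSetoid_inv_mul_le_sup (π γ : Perm α) :
    cycleSetoid (π⁻¹ * γ) ≤ cycleSetoid π ⊔ cycleSetoid γ :=
  cycleSetoid_le_iff.2 fun x =>
    (cycleSetoid π ⊔ cycleSetoid γ).trans'
      (le_sup_right (a := cycleSetoid π) (sameCycle_apply_right.2 (SameCycle.refl γ x)))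
      (le_sup_left (b := cycleSetoid γ) (sameCycle_symm_apply_right.2 (SameCycle.refl π _)))

theorem cycleSetoid_one : cycleSetoid (1 : Perm α) = ⊥ :=
  le_bot_iff.1 (cycleSetoid_le_iff.2 fun x => by simp)

theorem cycleSetoid_inv (ρ : Perm α) : cycleSetoid ρ⁻¹ = cycleSetoid ρ :=
  Setoid.ext fun _ _ => sameCycle_inv

theorem numCycles_one : numCycles (1 : Perm α) = Nat.card α := by
  rw [numCycles, cycleSetoid_one]
  exact Nat.card_congr Setoid.quotientBotEquiv

theorem numCycles_inv (ρ : Perm α) : numCycles ρ⁻¹ = numCycles ρ := by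
  rw [numCycles, numCycles, cycleSetoid_inv]

section Finite

variable [Finite α] [DecidableEq α]

theorem sameCycle_swap_mul_of_not_sameCycle {ρ : Perm α} {a b : α}
    (h : ¬ρ.SameCycle a b) : (swap a b * ρ).SameCycle a b := by
  set σ := swap a b * ρ
  by_contra hσ
  -- `σ` agrees with `ρ` along the forward `ρ`-orbit of `a`, which never reaches `b`; by
  -- finiteness that orbit contains `ρ⁻¹ a = σ⁻¹ b`
  have forward (k : ℕ) : σ.SameCycle a ((ρ ^ k) a) := by
    induction k with
    | zero => exact SameCycle.refl σ a
    | succ k ih =>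
      have hρ : (ρ ^ (k + 1)) a = swap a b (σ ((ρ ^ k) a)) := by
        simp [σ, pow_succ']
      have hσk : σ.SameCycle a (σ ((ρ ^ k) a)) := sameCycle_apply_right.2 ih
      rw [hρ, swap_apply_of_ne_of_ne]
      · exact hσk
      · exact fun hka => h ⟨(k + 1 : ℕ), by rw [zpow_natCast, hρ, hka, swap_apply_left]⟩
      · exact fun hkb => hσ (hkb ▸ hσk)
  obtain ⟨k, hk⟩ := (sameCycle_symm_apply_right.2 (SameCycle.refl ρ a)).exists_nat_pow_eq
  have hinv : ρ⁻¹ a = σ⁻¹ b := by simp [σ]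
  exact hσ (sameCycle_symm_apply_right.1 (hinv ▸ hk ▸ forward k))

theorem numCycles_swap_mul_add_one_le {ρ : Perm α} {a b : α} (h : ¬ρ.SameCycle a b) :
    numCycles (swap a b * ρ) + 1 ≤ numCycles ρ := by
  have hmerge := sameCycle_swap_mul_of_not_sameCycle h
  have hle : cycleSetoid ρ ≤ cycleSetoid (swap a b * ρ) := by
    simpa only [swap_mul_self_mul] using cycleSetoid_swap_mul_le le_rfl hmerge
  exact Setoid.card_quotient_lt_of_le hle hmerge h

theorem numCycles_swap_mul_le (ρ : Perm α) (a b : α) :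
    numCycles (swap a b * ρ) ≤ numCycles ρ + 1 :=
  Setoid.card_quotient_le_card_quotient_add_one fun _ hu hab => by
    simpa only [swap_mul_self_mul] using cycleSetoid_swap_mul_le (a := a) (b := b) hu hab

theorem Equiv.Perm.swap_induction_on_not_sameCycle {P : Perm α → Prop} (one : P 1)
    (swap_mul : ∀ ρ a b, ¬ρ.SameCycle a b → P ρ → P (swap a b * ρ)) (ρ : Perm α) : P ρ := by
  have := Fintype.ofFinite α
  induction h : ρ.support.card using Nat.strong_induction_on generalizing ρ with
  | _ k ih =>
    rcases eq_or_ne ρ 1 with rfl | hρ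
    · exact one
    obtain ⟨a, ha⟩ : ∃ a, ρ a ≠ a := not_forall.1 fun h => hρ (Perm.ext h)
    have hfix : Function.IsFixedPt (swap a (ρ a) * ρ) a := by simp [Function.IsFixedPt]
    rw [← swap_mul_self_mul a (ρ a) ρ]
    exact swap_mul _ a (ρ a) (fun hsc => ha (hsc.eq_of_left hfix).symm)
      (ih _ (h ▸ card_support_swap_mul ha) _ rfl)

theorem numCycles_add_numCycles_add_numCycles_inv_mul_le_of_swap_mul {π γ : Perm α} {a b : α}
    (hab : ¬γ.SameCycle a b)
    (ih : numCycles π + numCycles γ + numCycles (π⁻¹ * γ) ≤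
      Nat.card α + 2 * Nat.card (Quotient (cycleSetoid π ⊔ cycleSetoid γ))) :
    numCycles π + numCycles (swap a b * γ) + numCycles (π⁻¹ * (swap a b * γ)) ≤
      Nat.card α + 2 * Nat.card (Quotient (cycleSetoid π ⊔ cycleSetoid (swap a b * γ))) := by
  set J := cycleSetoid π ⊔ cycleSetoid γ
  have hγ := numCycles_swap_mul_add_one_le hab
  have hjoin (u : Setoid α) (hu : J ≤ u) (hu_ab : u a b) :
      cycleSetoid π ⊔ cycleSetoid (swap a b * γ) ≤ u :=
    sup_le (le_sup_left.trans hu) (cycleSetoid_swap_mul_le (le_sup_right.trans hu) hu_ab)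
  have hσ : π⁻¹ * (swap a b * γ) = swap (π⁻¹ a) (π⁻¹ b) * (π⁻¹ * γ) := by
    rw [swap_apply_apply]
    group
  rw [hσ]
  by_cases hsc : (π⁻¹ * γ).SameCycle (π⁻¹ a) (π⁻¹ b)
  · have hJ : J a b := by
      have hπ (x : α) : J x (π⁻¹ x) :=
        le_sup_left (b := cycleSetoid γ) (sameCycle_symm_apply_right.2 (SameCycle.refl π x))
      exact J.trans' (J.trans' (hπ a) (cycleSetoid_inv_mul_le_sup π γ hsc)) (J.symm' (hπ b))
    have := numCycles_swap_mul_le (π⁻¹ * γ) (π⁻¹ a) (π⁻¹ b)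
    have := Setoid.card_quotient_le_of_le (hjoin J le_rfl hJ)
    omega
  · have := numCycles_swap_mul_add_one_le hsc
    have := Setoid.card_quotient_le_card_quotient_add_one hjoin
    omega

end Finite

theorem numCycles_add_numCycles_add_numCycles_inv_mul_le [Finite α] (π γ : Perm α) :
    numCycles π + numCycles γ + numCycles (π⁻¹ * γ) ≤
      Nat.card α + 2 * Nat.card (Quotient (cycleSetoid π ⊔ cycleSetoid γ)) := by
  classical
  induction γ using swap_induction_on_not_sameCycle with
  | one =>
    rw [numCycles_one, mul_one, numCycles_inv, cycleSetoid_one, sup_bot_eq]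
    unfold numCycles
    omega
  | swap_mul γ a b hab ih =>
    exact numCycles_add_numCycles_add_numCycles_inv_mul_le_of_swap_mul hab ih

/-- For any two permutations `π, γ ∈ S_n`,
`#(π) + #(γ) + #(π⁻¹γ) ≤ n + 2·#(π ∨ γ)`, where `π ∨ γ` is the join in the
partition lattice of the cycle partitions of `π` and `γ`. -/
theorem mingo_nica_inequality {n : ℕ} (π γ : Equiv.Perm (Fin n)) :
    numCycles π + numCycles γ + numCycles (π⁻¹ * γ) ≤
      n + 2 * Nat.card (Quotient (cycleSetoid π ⊔ cycleSetoid γ)) := by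
  simpa only [Nat.card_fin] using numCycles_add_numCycles_add_numCycles_inv_mul_le π γ
end

section
/- Let G be a labelled oriented graph with elementarization Ḡ and let (τ,∼) be an oriented partition of the edges such that every loop of Ḡ is a singleton block of τ, and suppose the bipartite graph G(τ) is connected. Then #(τ∼) ≤ |V| − 2(c − 1), where c is the number of connected components of G, with equality if and only if G(τ) is a tree. -/
/-
Loops are singleton blocks hanging off a single component and identify no vertices, so they can
be discarded. For a loopless graph we induct on the number `c` of components. If `c = 1`, the
bound reads `#(τ∼) ≤ |V|`, and both equality and the tree condition say that no block contains
two distinct elementary edges. If `c > 1`, connectivity of `G(τ)` yields a block containing edges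
`es`, `eo` in different components. Gluing the endpoints of `eo` onto the corresponding endpoints
of `es` (in the chosen orientations) gives a loopless graph with two vertices, one component and
one elementary edge fewer, the same blocks and the same number of classes of `τ∼`; both the bound
and the tree condition are invariant under this change.
-/

/-- Two oriented edges are elementarily equivalent when they connect the same
(unordered) pair of vertices. -/
def sameEnds {V E : Type*} (src trg : E → V) (e e' : E) : Prop :=
  ({src e, trg e} : Set V) = {src e', trg e'}

/-- The setoid on the edges whose classes are the edges of the
elementarization `Ḡ`. -/
def sameEndsSetoid {V E : Type*} (src trg : E → V) : Setoid E :=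
  ⟨sameEnds src trg, ⟨fun _ => rfl, fun h => h.symm, fun h1 h2 => h1.trans h2⟩⟩

/-- An oriented partition of the edges of (the elementarization of) the
labelled oriented graph with edge-endpoint maps `src`, `trg`: a partition
`rel` of the edges whose blocks are unions of elementarization classes,
together with, for each block, an identification of its edges determined by a
choice of orientation `ori` of each elementary edge. -/
structure OrientedEdgePartition {V E : Type*} (src trg : E → V) where
  /-- the partition of the (elementarized) edges -/
  rel : Setoid E
  sameEnds_le : ∀ e e', sameEnds src trg e e' → rel e e'
  /-- chosen orientation of each elementary edge -/
  ori : E → V × V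
  ori_spec : ∀ e, ori e = (src e, trg e) ∨ ori e = (trg e, src e)
  ori_const : ∀ e e', sameEnds src trg e e' → ori e = ori e'

/-- The vertex partition induced by an oriented partition of the edges:
the equivalence generated by identifying, for any two edges in the same
block, their first endpoints and their second endpoints (in the chosen
orientations). -/
def OrientedEdgePartition.vertexSetoid {V E : Type*} {src trg : E → V}
    (P : OrientedEdgePartition src trg) : Setoid V :=
  Relation.EqvGen.setoid (fun u v => ∃ e e', P.rel e e' ∧
    ((u = (P.ori e).1 ∧ v = (P.ori e').1) ∨ (u = (P.ori e).2 ∧ v = (P.ori e').2)))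

/-- The setoid on the vertices whose classes are the connected components of
the graph. -/
def compSetoid {V E : Type*} (src trg : E → V) : Setoid V :=
  Relation.EqvGen.setoid (fun u v => ∃ e, u = src e ∧ v = trg e)

/-- The connected component of (the endpoints of) an elementarized edge. -/
def edgeComp {V E : Type*} (src trg : E → V) :
    Quotient (sameEndsSetoid src trg) → Quotient (compSetoid src trg) :=
  Quotient.lift (fun e => Quotient.mk (compSetoid src trg) (src e)) (by
    intro e e' (h : sameEnds src trg e e')
    have h1 : src e' ∈ ({src e, trg e} : Set V) := by
      rw [h]; exact Set.mem_insert _ _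
    rcases h1 with h1 | h1
    · show Quotient.mk _ (src e) = Quotient.mk _ (src e')
      rw [h1]
    · exact Quotient.sound (by
        rw [h1]
        exact Relation.EqvGen.rel _ _ ⟨e, rfl, rfl⟩))

/-- The block of an elementarized edge under an oriented partition of the
edges. -/
def edgeBlock {V E : Type*} {src trg : E → V}
    (P : OrientedEdgePartition src trg) :
    Quotient (sameEndsSetoid src trg) → Quotient P.rel :=
  Quotient.lift (fun e => Quotient.mk P.rel e)
    (fun e e' h => Quotient.sound (P.sameEnds_le e e' h))

/-- The bipartite multigraph with white vertices `α`, black vertices `β`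
and one edge for each element of `ε`, with endpoints `f e` and `g e`;
recorded as a simple graph for connectivity purposes. -/
def bipGraph {α β ε : Type*} (f : ε → α) (g : ε → β) : SimpleGraph (α ⊕ β) where
  Adj x y := ∃ e, (x = Sum.inl (f e) ∧ y = Sum.inr (g e)) ∨
    (y = Sum.inl (f e) ∧ x = Sum.inr (g e))
  symm := by
    constructor
    rintro x y ⟨e, h | h⟩
    · exact ⟨e, Or.inr h⟩
    · exact ⟨e, Or.inl h⟩
  loopless := by
    constructor
    rintro x ⟨e, ⟨h1, h2⟩ | ⟨h1, h2⟩⟩ <;> subst h1 <;> simp at h2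

/-- The bipartite multigraph with edge set `ε` and endpoint maps `f`, `g` is a
tree: connected, and the number of vertices exceeds the number of edges by 1. -/
def isTreeBip {α β ε : Type*} (f : ε → α) (g : ε → β) : Prop :=
  (bipGraph f g).Connected ∧ Nat.card (α ⊕ β) = Nat.card ε + 1

open Relation Function

universe u

namespace Setoid

variable {α β : Type*}

def identify (s : Setoid α) (a b : α) : Setoid α where
  r x y := s x y ∨ (s x a ∧ s b y) ∨ (s x b ∧ s a y)
  iseqv := by
    have : ∀ {x y}, s x y → s y x := s.symm'
    have : ∀ {x y z}, s x y → s y z → s x z := s.trans'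
    exact ⟨fun x => Or.inl (s.refl x), fun h => by grind, fun h h' => by grind⟩

variable {s : Setoid α} {a b : α}

theorem le_identify : s ≤ s.identify a b := fun _ _ h => Or.inl h

theorem identify_rel : s.identify a b a b := Or.inr (Or.inl ⟨s.refl a, s.refl b⟩)

theorem identify_le {t : Setoid α} (hst : s ≤ t) (hab : t a b) : s.identify a b ≤ t := by
  rintro x y (h | ⟨hxa, hby⟩ | ⟨hxb, hay⟩)
  · exact hst h
  · exact t.trans' (hst hxa) (t.trans' hab (hst hby))
  · exact t.trans' (hst hxb) (t.trans' (t.symm' hab) (hst hay))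

theorem card_quotient_identify_add_one [Finite α] (h : ¬ s a b) :
    Nat.card (Quotient (s.identify a b)) + 1 = Nat.card (Quotient s) := by
  classical
  let f (q : {q : Quotient s // q ≠ ⟦b⟧}) : Quotient (s.identify a b) :=
    Quotient.map' id (fun _ _ => Or.inl) q.1
  have hf : Bijective f := by
    refine ⟨?_, fun q => ?_⟩
    · rintro ⟨x, hx⟩ ⟨y, hy⟩ hxy
      induction x using Quotient.inductionOn
      induction y using Quotient.inductionOn
      rcases (Quotient.exact hxy : s.identify a b _ _) with h | ⟨-, h⟩ | ⟨h, -⟩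
      exacts [Subtype.ext (Quotient.sound h), (hy (Quotient.sound (s.symm' h))).elim,
        (hx (Quotient.sound h)).elim]
    · induction q using Quotient.inductionOn with | _ x => ?_
      by_cases hx : s x b
      · exact ⟨⟨⟦a⟧, fun hab => h (Quotient.exact hab)⟩,
          Quotient.sound (Or.inr (Or.inl ⟨s.refl a, s.symm' hx⟩))⟩
      · exact ⟨⟨⟦x⟧, fun hxb => hx (Quotient.exact hxb)⟩, rfl⟩
  rw [Nat.card_congr (Equiv.ofBijective f hf).symm, ← Finite.card_option,
    Nat.card_congr (Equiv.optionSubtypeNe _)]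

theorem card_quotient_eq_of_retract {t : Setoid β} (ρ : α → β) (ι : β → α)
    (hρι : LeftInverse ρ ι) (hρ : s ≤ t.comap ρ) (hι : t ≤ s.comap ι)
    (hιρ : ∀ x, s (ι (ρ x)) x) : Nat.card (Quotient s) = Nat.card (Quotient t) :=
  Nat.card_congr
    { toFun := Quotient.map' ρ hρ
      invFun := Quotient.map' ι hι
      left_inv := fun q => q.inductionOn fun x => Quotient.sound (hιρ x)
      right_inv := fun q => q.inductionOn fun y => congrArg Quotient.mk'' (hρι y) }

theorem card_quotient_eq_iff_le [Finite α] {t : Setoid α} (h : s ≤ t) :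
    Nat.card (Quotient t) = Nat.card (Quotient s) ↔ t ≤ s := by
  let f : Quotient s → Quotient t := Quotient.map' id h
  have hf : Surjective f := fun q => q.inductionOn fun x => ⟨⟦x⟧, rfl⟩
  refine ⟨fun hcard x y hxy => ?_, fun hts => by rw [le_antisymm h hts]⟩
  have hinj := ((Nat.bijective_iff_surjective_and_card f).2 ⟨hf, hcard.symm⟩).1
  exact Quotient.exact (hinj (Quotient.sound hxy : f ⟦x⟧ = f ⟦y⟧))

theorem card_quotient_eq_card_iff_eq_bot [Finite α] :
    Nat.card (Quotient s) = Nat.card α ↔ s = ⊥ := by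
  refine ⟨fun hcard => ?_, fun hs => ?_⟩
  · have hinj := ((Nat.bijective_iff_surjective_and_card (Quotient.mk s)).2
      ⟨Quotient.mk_surjective, hcard.symm⟩).1
    rw [← ker_mk_eq s, ker_eq_bot_iff]
    exact hinj
  · subst hs
    exact (Nat.card_congr (Equiv.ofBijective _
      ⟨fun x y h => Quotient.exact h, Quotient.mk_surjective⟩)).symm

theorem card_quotient_eq_add_of_invariant [Finite α] (p : α → Prop)
    (hp : ∀ x y, s x y → (p x ↔ p y)) :
    Nat.card (Quotient s) = Nat.card (Quotient (s.comap (Subtype.val : Subtype p → α))) +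
      Nat.card (Quotient (s.comap (Subtype.val : {x // ¬ p x} → α))) := by
  classical
  let p' : Quotient s → Prop := Quotient.lift p fun x y h => propext (hp x y h)
  rw [← Nat.card_congr (Equiv.subtypeQuotientEquivQuotientSubtype p p' (s₂ := s.comap _)
      (fun _ => Iff.rfl) fun _ _ => Iff.rfl),
    ← Nat.card_congr (Equiv.subtypeQuotientEquivQuotientSubtype (fun x => ¬ p x)
      (fun q => ¬ p' q) (s₂ := s.comap _) (fun _ => Iff.rfl) fun _ _ => Iff.rfl),
    ← Nat.card_sum, Nat.card_congr (Equiv.sumCompl p')]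

end Setoid

section BipGraph

variable {α β ε α' β' ε' : Type*} {f : ε → α} {g : ε → β}

def linked (f : ε → α) (g : ε → β) (x y : α) : Prop :=
  ∃ e e', g e = g e' ∧ f e = x ∧ f e' = y

theorem bipGraph_adj_inl_inr (e : ε) : (bipGraph f g).Adj (.inl (f e)) (.inr (g e)) :=
  ⟨e, .inl ⟨rfl, rfl⟩⟩

theorem SimpleGraph.Reachable.eq_of_forall_adj {V X : Type*} {G : SimpleGraph V} {φ : V → X}
    (h : ∀ u v, G.Adj u v → φ u = φ v) {u v : V} (huv : G.Reachable u v) : φ u = φ v := by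
  obtain ⟨w⟩ := huv
  induction w with
  | nil => rfl
  | cons hadj _ ih => exact (h _ _ hadj).trans ih

theorem bipGraph_reachable_of_eqvGen_linked {x y : α} (h : EqvGen (linked f g) x y) :
    (bipGraph f g).Reachable (.inl x) (.inl y) := by
  induction h with
  | rel _ _ h =>
    obtain ⟨e, e', he, rfl, rfl⟩ := h
    exact (bipGraph_adj_inl_inr e).reachable.trans (he ▸ (bipGraph_adj_inl_inr e').reachable.symm)
  | refl => rfl
  | symm _ _ _ ih => exact ih.symm
  | trans _ _ _ _ _ ih ih' => exact ih.trans ih'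

theorem bipGraph_connected_iff (hg : Surjective g) :
    (bipGraph f g).Connected ↔ Nonempty α ∧ ∀ x y, EqvGen (linked f g) x y := by
  constructor
  · intro hconn
    refine ⟨?_, fun x y => ?_⟩
    · obtain ⟨x | b⟩ := hconn.nonempty
      exacts [⟨x⟩, ⟨f (surjInv hg b)⟩]
    · let φ : α ⊕ β → Quotient (EqvGen.setoid (linked f g)) :=
        Sum.elim (Quotient.mk _) fun b => ⟦f (surjInv hg b)⟧
      have hφ : ∀ e, φ (.inl (f e)) = φ (.inr (g e)) := fun e =>
        Quotient.sound (EqvGen.rel _ _ ⟨e, surjInv hg (g e), (surjInv_eq hg _).symm, rfl, rfl⟩)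
      have hadj : ∀ u v, (bipGraph f g).Adj u v → φ u = φ v := by
        rintro u v ⟨e, ⟨rfl, rfl⟩ | ⟨rfl, rfl⟩⟩
        exacts [hφ e, (hφ e).symm]
      exact Quotient.exact ((hconn.preconnected (.inl x) (.inl y)).eq_of_forall_adj hadj)
  · rintro ⟨⟨x₀⟩, hlinked⟩
    refine (SimpleGraph.connected_iff_exists_forall_reachable _).2 ⟨.inl x₀, ?_⟩
    rintro (x | b)
    · exact bipGraph_reachable_of_eqvGen_linked (hlinked x₀ x)
    · obtain ⟨e, rfl⟩ := hg b
      exact (bipGraph_reachable_of_eqvGen_linked (hlinked _ _)).trans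
        (bipGraph_adj_inl_inr e).reachable

theorem SimpleGraph.Connected.bipGraph_of_linked {f' : ε' → α'} {g' : ε' → β'}
    (hg : Surjective g) (hg' : Surjective g') (φ : α → α') (hφ : Surjective φ)
    (h : ∀ x y, linked f g x y → EqvGen (linked f' g') (φ x) (φ y))
    (hconn : (bipGraph f g).Connected) : (bipGraph f' g').Connected := by
  obtain ⟨⟨x⟩, hlinked⟩ := (bipGraph_connected_iff hg).1 hconn
  refine (bipGraph_connected_iff hg').2 ⟨⟨φ x⟩, fun x' y' => ?_⟩
  obtain ⟨x, rfl⟩ := hφ x'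
  obtain ⟨y, rfl⟩ := hφ y'
  exact Setoid.eqvGen_le (s := (EqvGen.setoid (linked f' g')).comap φ) h (hlinked x y)

end BipGraph

section Partition

variable {V E : Type*} {src trg : E → V}

theorem compSetoid_src_of_mem {e : E} {v : V} (hv : v ∈ ({src e, trg e} : Set V)) :
    compSetoid src trg (src e) v := by
  rcases hv with rfl | rfl
  exacts [(compSetoid src trg).refl _, EqvGen.rel _ _ ⟨e, rfl, rfl⟩]

theorem compSetoid_src_of_sameEnds {e e' : E} (h : sameEnds src trg e e') :
    compSetoid src trg (src e) (src e') :=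
  compSetoid_src_of_mem (h ▸ Set.mem_insert _ _)

theorem compSetoid_src_trg (e : E) : compSetoid src trg (src e) (trg e) :=
  compSetoid_src_of_mem (Set.mem_insert_of_mem _ rfl)

theorem linked_edgeComp_edgeBlock_iff (P : OrientedEdgePartition src trg)
    {x y : Quotient (compSetoid src trg)} :
    linked (edgeComp src trg) (edgeBlock P) x y ↔
      ∃ e e', P.rel e e' ∧ ⟦src e⟧ = x ∧ ⟦src e'⟧ = y := by
  constructor
  · rintro ⟨ε, ε', h, rfl, rfl⟩
    induction ε using Quotient.inductionOn with | _ e => ?_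
    induction ε' using Quotient.inductionOn with | _ e' => ?_
    exact ⟨e, e', Quotient.exact h, rfl, rfl⟩
  · rintro ⟨e, e', h, rfl, rfl⟩
    exact ⟨⟦e⟧, ⟦e'⟧, Quotient.sound h, rfl, rfl⟩

theorem edgeBlock_surjective (P : OrientedEdgePartition src trg) : Surjective (edgeBlock P) :=
  fun q => q.inductionOn fun e => ⟨⟦e⟧, rfl⟩

namespace OrientedEdgePartition

variable (P : OrientedEdgePartition src trg)

theorem ori_pair (e : E) : ({(P.ori e).1, (P.ori e).2} : Set V) = {src e, trg e} := by
  rcases P.ori_spec e with h | h <;> rw [h]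
  exact Set.pair_comm _ _

theorem ori_fst_ne_snd {e : E} (he : src e ≠ trg e) : (P.ori e).1 ≠ (P.ori e).2 := by
  rcases P.ori_spec e with h | h <;> rw [h]
  exacts [he, he.symm]

theorem compSetoid_src_ori_fst (e : E) : compSetoid src trg (src e) (P.ori e).1 :=
  compSetoid_src_of_mem (P.ori_pair e ▸ Set.mem_insert _ _)

theorem compSetoid_src_ori_snd (e : E) : compSetoid src trg (src e) (P.ori e).2 :=
  compSetoid_src_of_mem (P.ori_pair e ▸ Set.mem_insert_of_mem _ rfl)

theorem sameEnds_of_ori_eq {e e' : E} (h : P.ori e = P.ori e') : sameEnds src trg e e' := by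
  rw [sameEnds, ← P.ori_pair, ← P.ori_pair, h]

theorem vertexSetoid_eq_bot_iff : P.vertexSetoid = ⊥ ↔ P.rel ≤ sameEndsSetoid src trg := by
  constructor
  · intro h e e' he
    have gen : ∀ u v, P.vertexSetoid u v → u = v := fun u v huv => by
      rwa [h, Setoid.bot_def] at huv
    exact P.sameEnds_of_ori_eq
      (Prod.ext (gen _ _ (EqvGen.rel _ _ ⟨e, e', he, .inl ⟨rfl, rfl⟩⟩))
        (gen _ _ (EqvGen.rel _ _ ⟨e, e', he, .inr ⟨rfl, rfl⟩⟩)))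
  · intro h
    refine le_bot_iff.1 (Setoid.eqvGen_le ?_)
    rintro _ _ ⟨e, e', he, ⟨rfl, rfl⟩ | ⟨rfl, rfl⟩⟩ <;> rw [P.ori_const e e' (h he)]

theorem card_vertexSetoid_eq_card_iff [Finite V] [Finite E] :
    Nat.card (Quotient P.vertexSetoid) = Nat.card V ↔
      Nat.card (Quotient P.rel) = Nat.card (Quotient (sameEndsSetoid src trg)) := by
  rw [Setoid.card_quotient_eq_card_iff_eq_bot, vertexSetoid_eq_bot_iff,
    Setoid.card_quotient_eq_iff_le fun e e' => P.sameEnds_le e e']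

theorem exists_rel_not_compSetoid [Finite V]
    (hconn : (bipGraph (edgeComp src trg) (edgeBlock P)).Connected)
    (hc : 1 < Nat.card (Quotient (compSetoid src trg))) :
    ∃ e e', P.rel e e' ∧ ¬ compSetoid src trg (src e) (src e') := by
  by_contra! h
  obtain ⟨x, y, hxy⟩ := Finite.one_lt_card_iff_nontrivial.1 hc
  have hlinked : EqvGen.setoid (linked (edgeComp src trg) (edgeBlock P)) ≤ ⊥ := by
    refine Setoid.eqvGen_le fun x y hxy => ?_
    obtain ⟨e, e', he, rfl, rfl⟩ := (linked_edgeComp_edgeBlock_iff P).1 hxy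
    exact Quotient.sound (h e e' he)
  exact hxy (hlinked (((bipGraph_connected_iff (edgeBlock_surjective P)).1 hconn).2 x y))

end OrientedEdgePartition

end Partition

section Map

variable {V W E : Type*} {src trg : E → V} (φ : V → W)

theorem compSetoid_le_comap :
    compSetoid src trg ≤ (compSetoid (φ ∘ src) (φ ∘ trg)).comap φ :=
  Setoid.eqvGen_le fun _ _ ⟨e, hx, hy⟩ => EqvGen.rel _ _ ⟨e, congrArg φ hx, congrArg φ hy⟩

theorem card_compSetoid_comp {ι : W → V} (hφι : LeftInverse φ ι) {a b : V}
    (hab : φ a = φ b) (hι : ∀ v, (compSetoid src trg).identify a b (ι (φ v)) v) :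
    Nat.card (Quotient (compSetoid (φ ∘ src) (φ ∘ trg))) =
      Nat.card (Quotient ((compSetoid src trg).identify a b)) := by
  refine (Setoid.card_quotient_eq_of_retract φ ι hφι (Setoid.identify_le
    (compSetoid_le_comap φ) ((Setoid.comap_rel _ _ _ _).2 (hab ▸ Setoid.refl' _ _))) ?_ hι).symm
  refine Setoid.eqvGen_le fun _ _ ⟨e, hx, hy⟩ => ?_
  subst hx hy
  let t := (compSetoid src trg).identify a b
  exact t.trans' (hι _) (t.trans' (Setoid.le_identify (compSetoid_src_trg e)) (t.symm' (hι _)))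

namespace OrientedEdgePartition

variable (P : OrientedEdgePartition src trg)

def map (hrel : ∀ e e', sameEnds (φ ∘ src) (φ ∘ trg) e e' → P.rel e e')
    (hori : ∀ e e', sameEnds (φ ∘ src) (φ ∘ trg) e e' →
      Prod.map φ φ (P.ori e) = Prod.map φ φ (P.ori e')) :
    OrientedEdgePartition (φ ∘ src) (φ ∘ trg) where
  rel := P.rel
  sameEnds_le := hrel
  ori e := Prod.map φ φ (P.ori e)
  ori_spec e := by rcases P.ori_spec e with h | h <;> simp [h]
  ori_const := hori

variable {φ} (hrel : ∀ e e', sameEnds (φ ∘ src) (φ ∘ trg) e e' → P.rel e e')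
  (hori : ∀ e e', sameEnds (φ ∘ src) (φ ∘ trg) e e' →
      Prod.map φ φ (P.ori e) = Prod.map φ φ (P.ori e'))

theorem card_vertexSetoid_map {ι : W → V} (hφι : LeftInverse φ ι)
    (hι : ∀ v, P.vertexSetoid (ι (φ v)) v) :
    Nat.card (Quotient (P.map φ hrel hori).vertexSetoid) = Nat.card (Quotient P.vertexSetoid) := by
  refine (Setoid.card_quotient_eq_of_retract φ ι hφι ?_ ?_ hι).symm
  · refine Setoid.eqvGen_le fun _ _ ⟨e, e', he, h⟩ => EqvGen.rel _ _ ⟨e, e', he, ?_⟩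
    rcases h with ⟨rfl, rfl⟩ | ⟨rfl, rfl⟩
    exacts [.inl ⟨rfl, rfl⟩, .inr ⟨rfl, rfl⟩]
  · refine Setoid.eqvGen_le fun _ _ ⟨e, e', he, h⟩ => ?_
    have hgen : ∀ u u', P.vertexSetoid u u' → P.vertexSetoid (ι (φ u)) (ι (φ u')) :=
      fun u u' h => Setoid.trans' _ (hι u) (Setoid.trans' _ h (Setoid.symm' _ (hι u')))
    rcases h with ⟨rfl, rfl⟩ | ⟨rfl, rfl⟩
    · exact hgen _ _ (EqvGen.rel _ _ ⟨e, e', he, .inl ⟨rfl, rfl⟩⟩)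
    · exact hgen _ _ (EqvGen.rel _ _ ⟨e, e', he, .inr ⟨rfl, rfl⟩⟩)

theorem connected_map (hφ : Surjective φ)
    (hconn : (bipGraph (edgeComp src trg) (edgeBlock P)).Connected) :
    (bipGraph (edgeComp (φ ∘ src) (φ ∘ trg)) (edgeBlock (P.map φ hrel hori))).Connected := by
  refine hconn.bipGraph_of_linked (edgeBlock_surjective P) (edgeBlock_surjective _)
    (Quotient.map' φ (compSetoid_le_comap φ)) (fun q => ?_) fun x y hxy => ?_
  · obtain ⟨v, rfl⟩ := Quotient.mk_surjective q
    obtain ⟨u, rfl⟩ := hφ v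
    exact ⟨⟦u⟧, rfl⟩
  · obtain ⟨e, e', he, rfl, rfl⟩ := (linked_edgeComp_edgeBlock_iff P).1 hxy
    exact EqvGen.rel _ _ ((linked_edgeComp_edgeBlock_iff _).2 ⟨e, e', he, rfl, rfl⟩)

end OrientedEdgePartition

end Map

section Glue

variable {V Q : Type*} (a b : V × V)

open Classical in
noncomputable def glue (v : V) : V := if v = b.1 then a.1 else if v = b.2 then a.2 else v

structure IsGluingPair (q : V → Q) : Prop where
  fst_ne_snd_left : a.1 ≠ a.2
  fst_ne_snd_right : b.1 ≠ b.2
  class_left : q a.1 = q a.2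
  class_right : q b.1 = q b.2
  class_ne : q a.1 ≠ q b.1

variable {a b} {q : V → Q}

theorem glue_fst : glue a b b.1 = a.1 := if_pos rfl

theorem glue_of_ne {v : V} (h₁ : v ≠ b.1) (h₂ : v ≠ b.2) : glue a b v = v := by
  rw [glue, if_neg h₁, if_neg h₂]

theorem glue_rel {s : Setoid V} (h₁ : s a.1 b.1) (h₂ : s a.2 b.2) (v : V) :
    s (glue a b v) v := by
  unfold glue
  split_ifs with hv₁ hv₂
  exacts [hv₁ ▸ h₁, hv₂ ▸ h₂, s.refl v]

namespace IsGluingPair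

variable (h : IsGluingPair a b q)
include h

theorem glue_snd : glue a b b.2 = a.2 := by
  rw [glue, if_neg h.fst_ne_snd_right.symm, if_pos rfl]

theorem glue_ne (v : V) : glue a b v ≠ b.1 ∧ glue a b v ≠ b.2 := by
  obtain ⟨-, -, _, _, _⟩ := h
  unfold glue
  grind

theorem range_glue : Set.range (glue a b) = {b.1, b.2}ᶜ := by
  ext v
  simp only [Set.mem_range, Set.mem_compl_iff, Set.mem_insert_iff, Set.mem_singleton_iff, not_or]
  constructor
  · rintro ⟨u, rfl⟩
    exact h.glue_ne u
  · rintro ⟨h₁, h₂⟩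
    exact ⟨v, glue_of_ne h₁ h₂⟩

theorem glue_glue (v : V) : glue a b (glue a b v) = glue a b v :=
  glue_of_ne (h.glue_ne v).1 (h.glue_ne v).2

theorem leftInverse_rangeFactorization_glue :
    LeftInverse (Set.rangeFactorization (glue a b)) Subtype.val := by
  rintro ⟨_, v, rfl⟩
  exact Subtype.ext (h.glue_glue v)

theorem glue_left_fst : glue a b a.1 = a.1 := by
  simpa only [glue_fst] using h.glue_glue b.1

theorem glue_left_snd : glue a b a.2 = a.2 := by
  simpa only [h.glue_snd] using h.glue_glue b.2

theorem image_glue_left : glue a b '' {a.1, a.2} = {a.1, a.2} := by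
  rw [Set.image_pair, h.glue_left_fst, h.glue_left_snd]

theorem image_glue_right : glue a b '' {b.1, b.2} = {a.1, a.2} := by
  rw [Set.image_pair, glue_fst, h.glue_snd]

theorem card_range_glue_add_two [Finite V] : Nat.card (Set.range (glue a b)) + 2 = Nat.card V := by
  rw [h.range_glue, Nat.card_coe_set_eq, ← Set.ncard_pair h.fst_ne_snd_right, add_comm,
    Set.ncard_add_ncard_compl]

theorem glue_injOn {x y : V} (hxy : q x = q y) (hg : glue a b x = glue a b y) : x = y := by
  obtain ⟨_, _, _, _, _⟩ := h
  unfold glue at hg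
  grind

theorem pair_eq_or_of_glue_pair_eq {x y x' y' : V} (hxy : q x = q y) (hxy' : q x' = q y')
    (hne : x ≠ y) (hne' : x' ≠ y')
    (hg : ({glue a b x, glue a b y} : Set V) = {glue a b x', glue a b y'}) :
    ({x, y} : Set V) = {x', y'} ∨
      ({x, y} : Set V) = {a.1, a.2} ∧ ({x', y'} : Set V) = {b.1, b.2} ∨
      ({x, y} : Set V) = {b.1, b.2} ∧ ({x', y'} : Set V) = {a.1, a.2} := by
  obtain ⟨_, _, _, _, _⟩ := h
  -- `glue a b` is injective on each fibre of `q`; points of different fibres collide only as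
  -- `b.1, a.1 ↦ a.1` and `b.2, a.2 ↦ a.2`.
  simp only [Set.pair_eq_pair_iff, glue] at hg ⊢
  grind (splits := 40)

end IsGluingPair

end Glue

section Gluing

variable {V : Type u} {W E : Type*} {src trg : E → V}

theorem sameEnds_comp_iff {ψ : V → W} (hψ : Injective ψ) {e e' : E} :
    sameEnds (ψ ∘ src) (ψ ∘ trg) e e' ↔ sameEnds src trg e e' := by
  simp only [sameEnds, comp_apply, ← Set.image_pair, (Set.image_injective.2 hψ).eq_iff]

theorem IsGluingPair.card_compSetoid_add_one [Finite V] {a b : V × V}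
    (h : IsGluingPair a b (Quotient.mk (compSetoid src trg))) :
    Nat.card (Quotient (compSetoid (Set.rangeFactorization (glue a b) ∘ src)
        (Set.rangeFactorization (glue a b) ∘ trg))) + 1 =
      Nat.card (Quotient (compSetoid src trg)) := by
  rw [card_compSetoid_comp _ h.leftInverse_rangeFactorization_glue
    (Subtype.ext (h.glue_left_fst.trans glue_fst.symm)) (glue_rel Setoid.identify_rel
      (.inr (.inl ⟨Quotient.exact h.class_left.symm, Quotient.exact h.class_right⟩)))]
  exact Setoid.card_quotient_identify_add_one fun h' => h.class_ne (Quotient.sound h')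

namespace OrientedEdgePartition

variable (P : OrientedEdgePartition src trg) {es eo : E}

theorem isGluingPair_ori (hl : ∀ e, src e ≠ trg e)
    (hcomp : ¬ compSetoid src trg (src es) (src eo)) :
    IsGluingPair (P.ori es) (P.ori eo) (Quotient.mk (compSetoid src trg)) := by
  have hori : ∀ e, compSetoid src trg (P.ori e).1 (P.ori e).2 := fun e =>
    Setoid.trans' _ (Setoid.symm' _ (P.compSetoid_src_ori_fst e)) (P.compSetoid_src_ori_snd e)
  refine ⟨P.ori_fst_ne_snd (hl es), P.ori_fst_ne_snd (hl eo), Quotient.sound (hori es),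
    Quotient.sound (hori eo), fun h => hcomp ?_⟩
  exact Setoid.trans' _ (P.compSetoid_src_ori_fst es)
    (Setoid.trans' _ (Quotient.exact h) (Setoid.symm' _ (P.compSetoid_src_ori_fst eo)))

variable {P}

theorem sameEnds_glue_iff (hl : ∀ e, src e ≠ trg e)
    (hG : IsGluingPair (P.ori es) (P.ori eo) (Quotient.mk (compSetoid src trg))) {e e' : E} :
    sameEnds (glue (P.ori es) (P.ori eo) ∘ src) (glue (P.ori es) (P.ori eo) ∘ trg) e e' ↔
      (sameEndsSetoid src trg).identify es eo e e' := by
  have hglued : glue (P.ori es) (P.ori eo) '' {src es, trg es} =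
      glue (P.ori es) (P.ori eo) '' {src eo, trg eo} := by
    rw [← P.ori_pair, ← P.ori_pair, hG.image_glue_left, hG.image_glue_right]
  constructor
  · intro h
    rcases hG.pair_eq_or_of_glue_pair_eq (Quotient.sound (compSetoid_src_trg e))
      (Quotient.sound (compSetoid_src_trg e')) (hl e) (hl e') h with h | ⟨h, h'⟩ | ⟨h, h'⟩
    · exact Or.inl h
    · rw [P.ori_pair] at h h'
      exact Or.inr (Or.inl ⟨h, h'.symm⟩)
    · rw [P.ori_pair] at h h'
      exact Or.inr (Or.inr ⟨h, h'.symm⟩)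
  · simp only [sameEnds, comp_apply, ← Set.image_pair]
    rintro (h | ⟨h, h'⟩ | ⟨h, h'⟩)
    · exact congrArg _ h
    · exact (congrArg _ h).trans (hglued.trans (congrArg _ h'))
    · exact (congrArg _ h).trans (hglued.symm.trans (congrArg _ h'))

theorem exists_glued [Finite V] [Finite E] (hl : ∀ e, src e ≠ trg e)
    (hconn : (bipGraph (edgeComp src trg) (edgeBlock P)).Connected) (hrel : P.rel es eo)
    (hcomp : ¬ compSetoid src trg (src es) (src eo)) :
    ∃ (V' : Type u) (_ : Finite V') (src' trg' : E → V') (P' : OrientedEdgePartition src' trg'),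
      (∀ e, src' e ≠ trg' e) ∧ (bipGraph (edgeComp src' trg') (edgeBlock P')).Connected ∧
      Nat.card V' + 2 = Nat.card V ∧
      Nat.card (Quotient P'.vertexSetoid) = Nat.card (Quotient P.vertexSetoid) ∧
      Nat.card (Quotient (compSetoid src' trg')) + 1 = Nat.card (Quotient (compSetoid src trg)) ∧
      Nat.card (Quotient (sameEndsSetoid src' trg')) + 1 =
        Nat.card (Quotient (sameEndsSetoid src trg)) ∧
      Nat.card (Quotient P'.rel) = Nat.card (Quotient P.rel) := by
  have hG := P.isGluingPair_ori hl hcomp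
  let φ := Set.rangeFactorization (glue (P.ori es) (P.ori eo))
  have hsame : ∀ e e', sameEnds (φ ∘ src) (φ ∘ trg) e e' ↔
      (sameEndsSetoid src trg).identify es eo e e' := fun e e' =>
    (sameEnds_comp_iff Subtype.val_injective).symm.trans (sameEnds_glue_iff hl hG)
  have hrel' : ∀ e e', sameEnds (φ ∘ src) (φ ∘ trg) e e' → P.rel e e' := fun e e' h =>
    Setoid.identify_le (fun e e' => P.sameEnds_le e e') hrel ((hsame e e').1 h)
  have hφ : Prod.map φ φ (P.ori es) = Prod.map φ φ (P.ori eo) := by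
    simp only [Prod.map, φ, Set.rangeFactorization, hG.glue_left_fst, hG.glue_left_snd, glue_fst,
      hG.glue_snd]
  have hori' : ∀ e e', sameEnds (φ ∘ src) (φ ∘ trg) e e' →
      Prod.map φ φ (P.ori e) = Prod.map φ φ (P.ori e') := fun e e' h =>
    Setoid.identify_le (t := Setoid.ker fun e => Prod.map φ φ (P.ori e))
      (fun e e' h => congrArg _ (P.ori_const e e' h)) hφ ((hsame e e').1 h)
  have hloopless : ∀ e, (φ ∘ src) e ≠ (φ ∘ trg) e := fun e h =>
    hl e (hG.glue_injOn (Quotient.sound (compSetoid_src_trg e)) (congrArg Subtype.val h))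
  have hvert : ∀ v, P.vertexSetoid (glue (P.ori es) (P.ori eo) v) v :=
    glue_rel (EqvGen.rel _ _ ⟨es, eo, hrel, .inl ⟨rfl, rfl⟩⟩)
      (EqvGen.rel _ _ ⟨es, eo, hrel, .inr ⟨rfl, rfl⟩⟩)
  refine ⟨Set.range (glue (P.ori es) (P.ori eo)), inferInstance, φ ∘ src, φ ∘ trg,
    P.map φ hrel' hori', hloopless,
    P.connected_map hrel' hori' Set.rangeFactorization_surjective hconn,
    hG.card_range_glue_add_two,
    P.card_vertexSetoid_map hrel' hori' hG.leftInverse_rangeFactorization_glue hvert,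
    hG.card_compSetoid_add_one, ?_, rfl⟩
  rw [show sameEndsSetoid (φ ∘ src) (φ ∘ trg) = _ from Setoid.ext hsame]
  exact Setoid.card_quotient_identify_add_one fun h => hcomp (compSetoid_src_of_sameEnds h)

end OrientedEdgePartition

end Gluing

namespace OrientedEdgePartition

theorem card_compSetoid_pos {V E : Type*} [Finite V] {src trg : E → V}
    (P : OrientedEdgePartition src trg)
    (hconn : (bipGraph (edgeComp src trg) (edgeBlock P)).Connected) :
    0 < Nat.card (Quotient (compSetoid src trg)) :=
  have := ((bipGraph_connected_iff (edgeBlock_surjective P)).1 hconn).1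
  Nat.card_pos

theorem vertexSetoid_card_le_of_loopless {V : Type u} {E : Type*} [Finite V] [Finite E]
    {src trg : E → V} (P : OrientedEdgePartition src trg) (hl : ∀ e, src e ≠ trg e)
    (hconn : (bipGraph (edgeComp src trg) (edgeBlock P)).Connected) :
    Nat.card (Quotient P.vertexSetoid) + 2 * Nat.card (Quotient (compSetoid src trg)) ≤
        Nat.card V + 2 ∧
      (Nat.card (Quotient P.vertexSetoid) + 2 * Nat.card (Quotient (compSetoid src trg)) =
          Nat.card V + 2 ↔
        Nat.card (Quotient (compSetoid src trg)) + Nat.card (Quotient P.rel) =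
          Nat.card (Quotient (sameEndsSetoid src trg)) + 1) := by
  obtain ⟨k, hk⟩ := Nat.exists_eq_add_one_of_ne_zero (P.card_compSetoid_pos hconn).ne'
  induction k generalizing V with
  | zero =>
    have hle : Nat.card (Quotient P.vertexSetoid) ≤ Nat.card V :=
      Nat.card_le_card_of_surjective _ Quotient.mk_surjective
    have := P.card_vertexSetoid_eq_card_iff
    omega
  | succ k ih =>
    obtain ⟨es, eo, hrel, hcomp⟩ := P.exists_rel_not_compSetoid hconn (by omega)
    obtain ⟨V', _, src', trg', P', hl', hconn', hV, hn, hc, hm, hb⟩ :=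
      P.exists_glued hl hconn hrel hcomp
    have := ih P' hl' hconn' (by omega)
    omega

end OrientedEdgePartition

section Loops

variable {V E : Type*} {src trg : E → V}

theorem src_eq_trg_of_sameEnds {e e' : E} (h : sameEnds src trg e e') (he : src e = trg e) :
    src e' = trg e' := by
  rcases Set.pair_eq_pair_iff.1 h with ⟨h₁, h₂⟩ | ⟨h₁, h₂⟩ <;>
    rw [← h₁, ← h₂, he]

theorem src_ne_trg_iff_of_sameEnds {e e' : E} (h : sameEnds src trg e e') :
    src e ≠ trg e ↔ src e' ≠ trg e' :=
  not_congr
    ⟨src_eq_trg_of_sameEnds h, src_eq_trg_of_sameEnds ((sameEndsSetoid src trg).symm' h)⟩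

theorem compSetoid_nonloops :
    compSetoid (fun e : {e // src e ≠ trg e} => src e) (fun e => trg e) = compSetoid src trg := by
  refine le_antisymm (Setoid.eqvGen_le fun _ _ ⟨e, hx, hy⟩ => EqvGen.rel _ _ ⟨e, hx, hy⟩)
    (Setoid.eqvGen_le fun x y ⟨e, hx, hy⟩ => ?_)
  subst hx hy
  by_cases he : src e = trg e
  · rw [he]
  · exact EqvGen.rel _ _ ⟨⟨e, he⟩, rfl, rfl⟩

namespace OrientedEdgePartition

variable (P : OrientedEdgePartition src trg)

def restrict (p : E → Prop) :
    OrientedEdgePartition (fun e : Subtype p => src e) (fun e => trg e) where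
  rel := P.rel.comap Subtype.val
  sameEnds_le e e' := P.sameEnds_le e e'
  ori e := P.ori e
  ori_spec e := P.ori_spec e
  ori_const e e' := P.ori_const e e'

variable {P} (hloop : ∀ e e', src e = trg e → P.rel e e' → sameEnds src trg e e')
include hloop

theorem src_ne_trg_iff_of_rel {e e' : E} (h : P.rel e e') : src e ≠ trg e ↔ src e' ≠ trg e' :=
  not_congr ⟨fun he => src_eq_trg_of_sameEnds (hloop e e' he h) he,
    fun he => src_eq_trg_of_sameEnds (hloop e' e he (P.rel.symm' h)) he⟩

theorem vertexSetoid_restrict_nonloops :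
    (P.restrict fun e => src e ≠ trg e).vertexSetoid = P.vertexSetoid := by
  refine le_antisymm
    (Setoid.eqvGen_le fun _ _ ⟨e, e', he, h⟩ => EqvGen.rel _ _ ⟨e, e', he, h⟩)
    (Setoid.eqvGen_le fun x y ⟨e, e', he, h⟩ => ?_)
  by_cases hl : src e = trg e
  · rw [P.ori_const e e' (hloop e e' hl he)] at h
    rcases h with ⟨rfl, rfl⟩ | ⟨rfl, rfl⟩ <;> exact Setoid.refl' _ _
  · exact EqvGen.rel _ _ ⟨⟨e, hl⟩, ⟨e', (src_ne_trg_iff_of_rel hloop he).1 hl⟩, he, h⟩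

theorem connected_restrict_nonloops
    (hconn : (bipGraph (edgeComp src trg) (edgeBlock P)).Connected) :
    (bipGraph (edgeComp (fun e : {e // src e ≠ trg e} => src e) fun e => trg e)
      (edgeBlock (P.restrict fun e => src e ≠ trg e))).Connected := by
  refine hconn.bipGraph_of_linked (edgeBlock_surjective P) (edgeBlock_surjective _)
    (Quotient.map' id fun x y h => by rwa [compSetoid_nonloops]) (fun q => ?_) fun x y hxy => ?_
  · obtain ⟨v, rfl⟩ := Quotient.mk_surjective q
    exact ⟨⟦v⟧, rfl⟩
  · obtain ⟨e, e', he, rfl, rfl⟩ := (linked_edgeComp_edgeBlock_iff P).1 hxy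
    by_cases hl : src e = trg e
    · rw [Quotient.sound (compSetoid_src_of_sameEnds (hloop e e' hl he))]
      exact EqvGen.refl _
    · exact EqvGen.rel _ _ ((linked_edgeComp_edgeBlock_iff _).2
        ⟨⟨e, hl⟩, ⟨e', (src_ne_trg_iff_of_rel hloop he).1 hl⟩, he, rfl, rfl⟩)

theorem card_sameEnds_add_card_rel_restrict [Finite E] :
    Nat.card (Quotient (sameEndsSetoid src trg)) +
        Nat.card (Quotient (P.restrict fun e => src e ≠ trg e).rel) =
      Nat.card (Quotient
        (sameEndsSetoid (fun e : {e // src e ≠ trg e} => src e) fun e => trg e)) +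
        Nat.card (Quotient P.rel) := by
  have hloops : (sameEndsSetoid src trg).comap (Subtype.val : {e // ¬ src e ≠ trg e} → E) =
      P.rel.comap Subtype.val :=
    le_antisymm (fun e e' h => P.sameEnds_le _ _ h)
      fun (e e' : {e // ¬ src e ≠ trg e}) h => hloop _ _ (not_not.1 e.2) h
  have hm : Nat.card (Quotient (sameEndsSetoid src trg)) =
      Nat.card (Quotient
        (sameEndsSetoid (fun e : {e // src e ≠ trg e} => src e) fun e => trg e)) +
        Nat.card (Quotient ((sameEndsSetoid src trg).comap Subtype.val)) :=
    (sameEndsSetoid src trg).card_quotient_eq_add_of_invariant _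
      fun _ _ => src_ne_trg_iff_of_sameEnds
  have hb : Nat.card (Quotient P.rel) =
      Nat.card (Quotient (P.restrict fun e => src e ≠ trg e).rel) +
        Nat.card (Quotient (P.rel.comap Subtype.val)) :=
    P.rel.card_quotient_eq_add_of_invariant _ fun _ _ => src_ne_trg_iff_of_rel hloop
  rw [hloops] at hm
  omega

end OrientedEdgePartition

end Loops

/-- Let `(τ,∼)` be an oriented partition of the edges of a labelled oriented
graph `G` such that every loop of the elementarization is a singleton block
of `τ`, and suppose the bipartite graph `G(τ)` is connected.  Then
`#(τ∼) ≤ |V| − 2(c − 1)`, where `c` is the number of connected components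
of `G`, with equality if and only if `G(τ)` is a tree. -/
theorem vertexSetoid_card_le {V E : Type*} [Fintype V] [Fintype E]
    (src trg : E → V) (P : OrientedEdgePartition src trg)
    (hloop : ∀ e e', src e = trg e → P.rel e e' → sameEnds src trg e e')
    (hconn : (bipGraph (edgeComp src trg) (edgeBlock P)).Connected) :
    (Nat.card (Quotient P.vertexSetoid) : ℤ) ≤
      (Fintype.card V : ℤ) -
        2 * ((Nat.card (Quotient (compSetoid src trg)) : ℤ) - 1) ∧
    ((Nat.card (Quotient P.vertexSetoid) : ℤ) =
        (Fintype.card V : ℤ) -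
          2 * ((Nat.card (Quotient (compSetoid src trg)) : ℤ) - 1) ↔
      isTreeBip (edgeComp src trg) (edgeBlock P)) := by
  obtain ⟨hle, hiff⟩ := (P.restrict fun e => src e ≠ trg e).vertexSetoid_card_le_of_loopless
    (fun e => e.2) (P.connected_restrict_nonloops hloop hconn)
  rw [P.vertexSetoid_restrict_nonloops hloop, compSetoid_nonloops] at hle hiff
  have hcard := P.card_sameEnds_add_card_rel_restrict hloop
  rw [isTreeBip, Nat.card_sum, ← Nat.card_eq_fintype_card]
  simp only [hconn, true_and]
  omega
end

section
/- If (τ,σ₁) and (τ,σ₂) are both loop-free non-crossing pair partitioned permutations of the (m_1,…,m_r)-annulus (elements of PS_{NC_2}^{loop-free}(m_1,…,m_r)) with the same outer partition τ, then σ₁ = σ₂. -/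
/-- Map from the blocks of a finer setoid to those of a coarser one. -/
def blockMap {α : Type*} {s t : Setoid α} (h : s ≤ t) : Quotient s → Quotient t :=
  Quotient.lift (fun a => Quotient.mk t a) (fun _ _ hab => Quotient.sound (h hab))

/-- The index set of the `(m 0, …, m (r-1))`-annulus. -/
def annIndex (r : ℕ) (m : Fin r → ℕ) : Type := Σ i : Fin r, Fin (m i)

/-- The permutation `γ_{m_1,…,m_r}` whose cycles are the `r` discrete circles
of sizes `m 0, …, m (r-1)`. -/
def gammaAnn (r : ℕ) (m : Fin r → ℕ) : Equiv.Perm (annIndex r m) :=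
  Equiv.sigmaCongrRight fun i => finRotate (m i)

/-- `(τ,σ)` is a loop-free non-crossing pair partitioned permutation relative
to `γ`: `σ` is a pairing (fixed-point-free involution) with
`#(σ)+#(γ)+#(σ⁻¹γ) = m + 2#(σ∨γ)`, every cycle of `σ` is contained in a block
of `τ`, the bipartite graph `Γ(τ,σ,γ)` (white vertices the blocks of `σ∨γ`,
black vertices the blocks of `τ`, one edge per cycle of `σ`) is a tree, and
every loop block of `σ` (a cycle `{u, σ u}` with `u`, `σ u` in the same cycle
of `γσ`) is itself a block of `τ`. -/
def IsLoopFreeNCPairPartitionedPerm {α : Type*} (γ σ : Equiv.Perm α)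
    (τ : Setoid α) : Prop :=
  (∀ x, σ x ≠ x) ∧ σ * σ = 1 ∧
  numCycles σ + numCycles γ + numCycles (σ⁻¹ * γ) =
    Nat.card α + 2 * Nat.card (Quotient (cycleSetoid σ ⊔ cycleSetoid γ)) ∧
  (∃ h : cycleSetoid σ ≤ τ,
    isTreeBip
      (blockMap (le_sup_left : cycleSetoid σ ≤ cycleSetoid σ ⊔ cycleSetoid γ))
      (blockMap h)) ∧
  (∀ u v, (γ * σ).SameCycle u (σ u) → τ u v → v = u ∨ v = σ u)

/-!
Fix a point `a`. If `σ₂ a` lies in the block of `a` in `σ₁ ∨ γ`, the pairs of `a` and `σ₂ a` are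
edges of the tree `Γ(τ,σ₁,γ)` with the same ends, so they are the same pair: `σ₂ a = σ₁ a`.
Otherwise delete the edge `{a, σ₁ a}` from `Γ(τ,σ₁,γ)` and call a point near if its block of
`σ₁ ∨ γ` stays connected to that of `a`. Being near is `γ`-invariant, and since `σ₂` moves inside
the blocks of `τ`, it is preserved by `σ₂` at every pair other than `{a, σ₁ a}`. As `a` is near
and `σ₂ a` is not, the `γσ₂`-cycle of `a` must come back through the deleted edge: some `x` on it
has `σ₂ x = a` or `σ₂ x = σ₁ a`. In the first case `{a, σ₂ a}` is a loop block of `σ₂`, hence a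
block of `τ`, and it contains `σ₁ a`. In the second, `a` and `σ₁ a` lie in one block of
`σ₂ ∨ γ` and in one block of `τ`, so the tree `Γ(τ,σ₂,γ)` forces `σ₁ a ∈ {a, σ₂ a}`.
-/

open SimpleGraph Equiv

lemma bipGraph_adj {α β ε : Type*} {f : ε → α} {g : ε → β} (e : ε) :
    (bipGraph f g).Adj (.inl (f e)) (.inr (g e)) :=
  ⟨e, .inl ⟨rfl, rfl⟩⟩

def bipEdge {α β ε : Type*} (f : ε → α) (g : ε → β) (e : ε) : (bipGraph f g).edgeSet :=
  ⟨s(.inl (f e), .inr (g e)), bipGraph_adj e⟩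

lemma bipEdge_surjective {α β ε : Type*} {f : ε → α} {g : ε → β} :
    Function.Surjective (bipEdge f g) := by
  rintro ⟨e, he⟩
  induction e with
  | _ u v =>
    obtain ⟨e, ⟨rfl, rfl⟩ | ⟨rfl, rfl⟩⟩ := (mem_edgeSet _).1 he
    · exact ⟨e, rfl⟩
    · exact ⟨e, Subtype.ext Sym2.eq_swap⟩

namespace isTreeBip

variable {α β ε : Type*} [Finite ε] {f : ε → α} {g : ε → β}

lemma card_edgeSet (h : isTreeBip f g) : Nat.card (bipGraph f g).edgeSet = Nat.card ε := by
  have := h.1.card_vert_le_card_edgeSet_add_one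
  have := Nat.card_le_card_of_surjective _ (bipEdge_surjective (f := f) (g := g))
  have := h.2
  omega

lemma isTree [Finite α] [Finite β] (h : isTreeBip f g) : (bipGraph f g).IsTree :=
  isTree_iff_connected_and_card.2 ⟨h.1, by rw [h.card_edgeSet, h.2]⟩

lemma bipEdge_injective (h : isTreeBip f g) : Function.Injective (bipEdge f g) :=
  (bipEdge_surjective.bijective_of_nat_card_le h.card_edgeSet.ge).1

lemma eq_of_apply_eq_of_apply_eq (h : isTreeBip f g) {e₁ e₂ : ε} (hf : f e₁ = f e₂)
    (hg : g e₁ = g e₂) : e₁ = e₂ :=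
  h.bipEdge_injective <| Subtype.ext <| by simp only [bipEdge, hf, hg]

variable {e₀ e₁ e₂ : ε}

lemma adj_deleteEdges (h : isTreeBip f g) (he : e₁ ≠ e₀) :
    ((bipGraph f g).deleteEdges {s(.inl (f e₀), .inr (g e₀))}).Adj
      (.inl (f e₁)) (.inr (g e₁)) :=
  deleteEdges_adj.2
    ⟨bipGraph_adj e₁, fun h' ↦
      he (h.bipEdge_injective (Subtype.ext (Set.mem_singleton_iff.1 h')))⟩

lemma reachable_deleteEdges (h : isTreeBip f g) (h₁ : e₁ ≠ e₀) (h₂ : e₂ ≠ e₀)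
    (hg : g e₁ = g e₂) :
    ((bipGraph f g).deleteEdges {s(.inl (f e₀), .inr (g e₀))}).Reachable
      (.inl (f e₁)) (.inl (f e₂)) :=
  (h.adj_deleteEdges h₁).reachable.trans (hg ▸ (h.adj_deleteEdges h₂).reachable.symm)

lemma not_reachable_deleteEdges [Finite α] [Finite β] (h : isTreeBip f g) (h₁ : e₁ ≠ e₀)
    (hg : g e₁ = g e₀) :
    ¬ ((bipGraph f g).deleteEdges {s(.inl (f e₀), .inr (g e₀))}).Reachable
      (.inl (f e₀)) (.inl (f e₁)) := fun hr ↦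
  isBridge_iff.1 (isAcyclic_iff_forall_adj_isBridge.1 h.isTree.isAcyclic (bipGraph_adj e₀))
    (hr.trans (hg ▸ (h.adj_deleteEdges h₁).reachable))

end isTreeBip

namespace Equiv.Perm

variable {α : Type*} [Finite α] {π : Perm α} {x y : α}

lemma SameCycle.exists_not_and_apply {p : α → Prop} (hxy : π.SameCycle x y) (hx : ¬ p x)
    (hy : p y) : ∃ z, π.SameCycle x z ∧ ¬ p z ∧ p (π z) := by
  obtain ⟨n, rfl⟩ := hxy.exists_nat_pow_eq
  clear hxy
  induction n with
  | zero => exact absurd hy hx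
  | succ n ih =>
    by_cases hn : p ((π ^ n) x)
    · exact ih hn
    · exact ⟨(π ^ n) x, ⟨n, by simp⟩, hn, by rwa [pow_succ', mul_apply] at hy⟩

lemma SameCycle.eq_or_eq_of_mul_self (hπ : π * π = 1) (hxy : π.SameCycle x y) :
    y = x ∨ y = π x := by
  obtain ⟨n, rfl⟩ := hxy.exists_nat_pow_eq
  clear hxy
  induction n with
  | zero => exact .inl (by simp)
  | succ n ih =>
    rw [pow_succ', mul_apply]
    rcases ih with h | h <;> rw [h]
    · exact .inr (Eq.refl _)
    · exact .inl (by rw [← mul_apply, hπ, one_apply])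

end Equiv.Perm

lemma cycleSetoid_le_of_forall_rel_apply {α : Type*} [Finite α] {π : Perm α} {s : Setoid α}
    (h : ∀ x, s x (π x)) : cycleSetoid π ≤ s := by
  intro x y hxy
  obtain ⟨n, rfl⟩ := hxy.exists_nat_pow_eq
  clear hxy
  induction n with
  | zero => exact s.refl x
  | succ n ih => exact s.trans ih (by rw [pow_succ', Perm.mul_apply]; exact h _)

lemma cycleSetoid_mul_le_sup {α : Type*} [Finite α] (γ σ : Perm α) :
    cycleSetoid (γ * σ) ≤ cycleSetoid σ ⊔ cycleSetoid γ :=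
  cycleSetoid_le_of_forall_rel_apply fun x ↦ (cycleSetoid σ ⊔ cycleSetoid γ).trans
    ((le_sup_left : cycleSetoid σ ≤ _) (Perm.SameCycle.refl σ x).apply_right)
    ((le_sup_right : cycleSetoid γ ≤ _) (Perm.SameCycle.refl γ (σ x)).apply_right)

namespace IsLoopFreeNCPairPartitionedPerm

variable {α : Type*} {γ σ σ' : Perm α} {τ : Setoid α}

lemma rel_apply (h : IsLoopFreeNCPairPartitionedPerm γ σ τ) (x : α) : τ x (σ x) :=
  h.2.2.2.1.1 (Perm.SameCycle.refl σ x).apply_right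

variable [Finite α]

lemma eq_or_eq_of_rel (h : IsLoopFreeNCPairPartitionedPerm γ σ τ) {x y : α}
    (hW : (cycleSetoid σ ⊔ cycleSetoid γ) x y) (hτ : τ x y) : y = x ∨ y = σ x := by
  obtain ⟨-, hσ, -, ⟨hle, htree⟩, -⟩ := h
  have hxy : Quotient.mk (cycleSetoid σ) x = Quotient.mk _ y :=
    htree.eq_of_apply_eq_of_apply_eq (Quotient.sound hW) (Quotient.sound hτ)
  exact (Quotient.exact hxy).eq_or_eq_of_mul_self hσ

lemma exists_sameCycle_apply_eq (h : IsLoopFreeNCPairPartitionedPerm γ σ τ)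
    (hσ' : ∀ x, τ x (σ' x)) {a : α} (ha : ¬ (cycleSetoid σ ⊔ cycleSetoid γ) a (σ' a)) :
    ∃ x, (γ * σ').SameCycle a x ∧ (σ' x = a ∨ σ' x = σ a) := by
  obtain ⟨-, hσ, -, ⟨hle, htree⟩, -⟩ := h
  let edge : α → Quotient (cycleSetoid σ) := Quotient.mk _
  let f := blockMap (le_sup_left : cycleSetoid σ ≤ cycleSetoid σ ⊔ cycleSetoid γ)
  let near (x : α) : Prop :=
    ((bipGraph f (blockMap hle)).deleteEdges
      {s(.inl (f (edge a)), .inr (blockMap hle (edge a)))}).Reachable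
      (.inl (f (edge a))) (.inl (f (edge x)))
  have near_apply_γ (x : α) : near (γ x) ↔ near x := by
    have : f (edge (γ x)) = f (edge x) :=
      (Quotient.sound ((le_sup_right : cycleSetoid γ ≤ cycleSetoid σ ⊔ cycleSetoid γ)
        (Perm.SameCycle.refl γ x).apply_right)).symm
    simp only [near, this]
  have hna : ¬ near (σ' a) := by
    refine htree.not_reachable_deleteEdges (fun he ↦ ha ?_) (Quotient.sound (hσ' a)).symm
    exact (le_sup_left : cycleSetoid σ ≤ cycleSetoid σ ⊔ cycleSetoid γ) (Quotient.exact he.symm)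
  obtain ⟨x, hx, hnx, hx'⟩ :=
    (Perm.SameCycle.refl (γ * σ') a).apply_left.exists_not_and_apply (p := near)
      ((near_apply_γ (σ' a)).not.2 hna) (Reachable.refl _)
  refine ⟨x, Perm.sameCycle_apply_left.1 hx, Perm.SameCycle.eq_or_eq_of_mul_self hσ
    (Quotient.exact (s := cycleSetoid σ) (Eq.symm ?_))⟩
  by_contra hne
  have hxa : edge x ≠ edge a := fun he ↦ hnx (by simp only [near, he]; exact .refl _)
  exact hnx (((near_apply_γ (σ' x)).1 hx').trans
    (htree.reachable_deleteEdges hne hxa (Quotient.sound (hσ' x)).symm))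

theorem unique (h₁ : IsLoopFreeNCPairPartitionedPerm γ σ τ)
    (h₂ : IsLoopFreeNCPairPartitionedPerm γ σ' τ) : σ = σ' := by
  have hσ_ne := h₁.1
  have hσ'_ne := h₂.1
  ext a
  by_cases hW : (cycleSetoid σ ⊔ cycleSetoid γ) a (σ' a)
  · exact ((h₁.eq_or_eq_of_rel hW (h₂.rel_apply a)).resolve_left (hσ'_ne a)).symm
  obtain ⟨x, hx, hσx | hσx⟩ := h₁.exists_sameCycle_apply_eq h₂.rel_apply hW
  · have hxa : x = σ' a := by rw [← hσx, ← Perm.mul_apply, h₂.2.1, Perm.one_apply]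
    -- `{a, σ' a}` is a loop block of `σ'`
    exact (h₂.2.2.2.2 a (σ a) (hxa ▸ hx) (h₁.rel_apply a)).resolve_left (hσ_ne a)
  · have hW' : (cycleSetoid σ' ⊔ cycleSetoid γ) a (σ a) :=
      (cycleSetoid σ' ⊔ cycleSetoid γ).trans (cycleSetoid_mul_le_sup γ σ' hx)
        (hσx ▸ (le_sup_left : cycleSetoid σ' ≤ _) (Perm.SameCycle.refl σ' x).apply_right)
    exact (h₂.eq_or_eq_of_rel hW' (h₁.rel_apply a)).resolve_left (hσ_ne a)

end IsLoopFreeNCPairPartitionedPerm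

/-- Uniqueness of the pairing in a loop-free non-crossing pair partitioned
permutation: if `(τ,σ₁)` and `(τ,σ₂)` are both elements of
`PS_{NC₂}^{loop-free}(m_1,…,m_r)` with the same outer partition `τ`, then
`σ₁ = σ₂`. -/
theorem pairing_unique_of_loopFree (r : ℕ) (m : Fin r → ℕ)
    (τ : Setoid (annIndex r m)) (σ₁ σ₂ : Equiv.Perm (annIndex r m))
    (h₁ : IsLoopFreeNCPairPartitionedPerm (gammaAnn r m) σ₁ τ)
    (h₂ : IsLoopFreeNCPairPartitionedPerm (gammaAnn r m) σ₂ τ) :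
    σ₁ = σ₂ := by
  have : Finite (annIndex r m) := inferInstanceAs (Finite (Σ i : Fin r, Fin (m i)))
  exact h₁.unique h₂
end
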